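/- Let d ≥ 3. For almost every ω in the Bernoulli path space of the simple random walk on ℤ^d, for every oriented edge (v,i) the sequence of signed crossing counts n ↦ γ_n(v,i) is eventually constant; in particular, almost surely the walk traverses each edge of the lattice only finitely many times, so the stabilized edge-count function Φ(ω) : (v,i) ↦ lim_n γ_n(v,i) is a well-defined everywhere-finite integer-valued function on the edges. -/

import Mathlib

open scoped BigOperators

/-- Lattice points of `ℤ^d`. -/
abbrev Pt (d : ℕ) : Type := Fin d → ℤ

/-- Oriented edges of the grid: `(v, i)` is the edge from `v` to `v + eᵢ`. -/
abbrev Edg (d : ℕ) : Type := (Fin d → ℤ) × Fin d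

/-- The `i`-th standard basis vector of `ℤ^d`. -/
def latE (d : ℕ) (i : Fin d) : Pt d := fun j => if j = i then 1 else 0

/-- Zero-divergence condition defining `1`-cycles on the grid. -/
def IsCycle (d : ℕ) (f : Edg d →₀ ℤ) : Prop :=
  ∀ u : Pt d, ∑ i : Fin d, (f (u, i) - f (u - latE d i, i)) = 0

/-- `B_d`: the additive group of `1`-cycles on the grid. -/
noncomputable def Bgrp (d : ℕ) : AddSubgroup (Edg d →₀ ℤ) where
  carrier := {f | IsCycle d f}
  zero_mem' := by intro u; simp
  add_mem' := by
    intro f g hf hg u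
    have h1 := hf u
    have h2 := hg u
    calc ∑ i : Fin d, ((f + g) (u, i) - (f + g) (u - latE d i, i))
        = ∑ i : Fin d, ((f (u, i) - f (u - latE d i, i))
            + (g (u, i) - g (u - latE d i, i))) := by
          refine Finset.sum_congr rfl fun i _ => ?_
          simp only [Finsupp.add_apply]; ring
      _ = 0 := by rw [Finset.sum_add_distrib, h1, h2, add_zero]
  neg_mem' := by
    intro f hf u
    have h1 := hf u
    calc ∑ i : Fin d, ((-f) (u, i) - (-f) (u - latE d i, i))
        = ∑ i : Fin d, -((f (u, i) - f (u - latE d i, i))) := by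
          refine Finset.sum_congr rfl fun i _ => ?_
          simp only [Finsupp.neg_apply]; ring
      _ = 0 := by rw [Finset.sum_neg_distrib, h1, neg_zero]

/-- Translation of `ℤ^d` on edges. -/
def edgeShift (d : ℕ) (u : Pt d) : Edg d ≃ Edg d where
  toFun p := (p.1 + u, p.2)
  invFun p := (p.1 - u, p.2)
  left_inv p := by simp
  right_inv p := by simp

/-- The translation action of `ℤ^d` on integer functions on edges:
`(u · f)(v, i) = f (v - u, i)`. -/
noncomputable def shiftF (d : ℕ) (u : Pt d) (f : Edg d →₀ ℤ) : Edg d →₀ ℤ :=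
  Finsupp.equivMapDomain (edgeShift d u) f

/-- One step of a lattice path: the letter `(i, b)` moves by `eᵢ` if `b` and by `-eᵢ`
otherwise. -/
def stepFn (d : ℕ) (p : Pt d) (s : Fin d × Bool) : Pt d :=
  p + (if s.2 then latE d s.1 else -latE d s.1)

/-- Total displacement of a word (= endpoint of the associated lattice path started at `0`). -/
def disp (d : ℕ) (w : List (Fin d × Bool)) : Pt d :=
  (w.map fun s => if s.2 then latE d s.1 else -latE d s.1).sum

/-- The signed edge-crossing count function of the lattice path spelled by the word `w`
starting at the point `p`. -/
noncomputable def crossFrom (d : ℕ) : Pt d → List (Fin d × Bool) → (Edg d →₀ ℤ)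
  | _, [] => 0
  | p, s :: rest =>
      (if s.2 then Finsupp.single (p, s.1) (1 : ℤ)
        else Finsupp.single (p - latE d s.1, s.1) (-1))
      + crossFrom d (stepFn d p s) rest

/-- The reversed path: spell the word backwards with all signs flipped. -/
def wordInv (d : ℕ) (w : List (Fin d × Bool)) : List (Fin d × Bool) :=
  w.reverse.map fun s => (s.1, !s.2)

/-- The 2-cocycle associated to a path system `τ`: the signed edge-crossing count of the
closed path `τ_v ⬝ (v + τ_w) ⬝ (τ_{v+w})⁻¹`. -/
noncomputable def betaCocycle (d : ℕ) (τ : Pt d → List (Fin d × Bool)) (v w : Pt d) : Edg d →₀ ℤ :=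
  crossFrom d 0 (τ v ++ τ w ++ wordInv d (τ (v + w)))

/-- The elementary `(i,j)`-placket at `v`. -/
noncomputable def placket (d : ℕ) (v : Pt d) (i j : Fin d) : Edg d →₀ ℤ :=
  Finsupp.single (v, i) 1 + Finsupp.single (v + latE d i, j) 1
    - Finsupp.single (v + latE d j, i) 1 - Finsupp.single (v, j) 1
open MeasureTheory in
/-- `μ` is the Bernoulli product on `ℕ → S` of the uniform measure on the finite set `S`:
it is a probability measure under which the coordinates are i.i.d. uniform on `S`, i.e.
every cylinder of length `n` has measure `|S|^{-n}`. -/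
def IsUniformBernoulli (S : Type*) [Fintype S] [MeasurableSpace S]
    (μ : Measure (ℕ → S)) : Prop :=
  IsProbabilityMeasure μ ∧
    ∀ (n : ℕ) (f : Fin n → S),
      μ {ω | ∀ k : Fin n, ω (k : ℕ) = f k} = ((Fintype.card S : ENNReal))⁻¹ ^ n


section AuxiliaryLemmas
open MeasureTheory Real

-- my lemmas
lemma disp_cons (d : ℕ) (s : Fin d × Bool) (w : List (Fin d × Bool)) :
    disp d (s :: w) = (if s.2 then latE d s.1 else -latE d s.1) + disp d w := by
  simp [disp]

lemma crossFrom_append (d : ℕ) (p : Pt d) (w w' : List (Fin d × Bool)) :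
    crossFrom d p (w ++ w') = crossFrom d p w + crossFrom d (p + disp d w) w' := by
  induction w generalizing p with
  | nil => simp [crossFrom, disp]
  | cons s t ih =>
      have hp : stepFn d p s + disp d t = p + disp d (s :: t) := by
        rw [disp_cons, stepFn, add_assoc]
      simp only [List.cons_append, crossFrom, List.append_eq, ih, hp, add_assoc]

lemma ofFn_succ'' {α : Type*} (n : ℕ) (f : ℕ → α) :
    (List.ofFn fun k : Fin (n+1) => f k) = (List.ofFn fun k : Fin n => f k) ++ [f n] := by
  rw [List.ofFn_succ']
  simp [List.concat_eq_append, Fin.castSucc]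

/-- single-step evaluation: values changed only at the current position's edges. -/
lemma crossFrom_single_apply (d : ℕ) (q : Pt d) (s : Fin d × Bool) (v : Pt d) (i : Fin d)
    (hv : q ≠ v) (hv' : q ≠ v + latE d i) :
    (crossFrom d q [s]) (v, i) = 0 := by
  simp only [crossFrom, add_zero, Finsupp.add_apply, Finsupp.coe_zero, Pi.zero_apply]
  rcases s with ⟨j, b⟩
  cases b <;>
    simp only [if_true, if_false, Bool.false_eq_true, add_zero] <;>
    rw [Finsupp.single_apply_eq_zero, Prod.mk.injEq] <;> rintro ⟨h1, h2⟩ <;> exfalso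
  · apply hv'
    rw [h1, h2]
    funext j'
    simp
  · exact hv h1.symm

lemma cross_stab (d : ℕ) (ω : ℕ → Fin d × Bool) (v : Pt d) (i : Fin d) (N : ℕ)
    (h : ∀ n, N ≤ n → disp d (List.ofFn fun k : Fin n => ω (k : ℕ)) ≠ v ∧
          disp d (List.ofFn fun k : Fin n => ω (k : ℕ)) ≠ v + latE d i) :
    ∀ n, N ≤ n → crossFrom d 0 (List.ofFn fun k : Fin n => ω (k : ℕ)) (v, i)
      = crossFrom d 0 (List.ofFn fun k : Fin N => ω (k : ℕ)) (v, i) := by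
  intro n hn
  induction n with
  | zero => cases Nat.le_zero.mp hn; rfl
  | succ m ih =>
    rcases Nat.lt_or_ge N (m+1) with hlt | hge
    · have hm : N ≤ m := Nat.lt_succ_iff.mp hlt
      rw [ofFn_succ'', crossFrom_append, Finsupp.add_apply, ← ih hm]
      have hz := crossFrom_single_apply d
        (0 + disp d (List.ofFn fun k : Fin m => ω (k : ℕ))) (ω m) v i
        (by simpa using (h m hm).1) (by simpa using (h m hm).2)
      rw [hz, add_zero]
    · have : N = m+1 := le_antisymm hn hge
      subst this; rfl

noncomputable def Fm (m : ℤ) : ℝ → ℂ :=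
  Set.indicator (Set.Icc (-π) π) (fun x => Complex.exp (Complex.I * m * x))

lemma Fm_integrable (m : ℤ) : Integrable (Fm m) := by
  rw [Fm, integrable_indicator_iff measurableSet_Icc]
  apply ContinuousOn.integrableOn_compact isCompact_Icc
  fun_prop

lemma Fm_integral (m : ℤ) : ∫ x : ℝ, Fm m x = if m = 0 then (2 * π : ℝ) else 0 := by
  rw [Fm, integral_indicator measurableSet_Icc, ← integral_Icc_eq_integral_Ioc.symm,
    ← intervalIntegral.integral_of_le (by linarith [pi_pos] : -π ≤ π)]
  rcases eq_or_ne m 0 with rfl | hm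
  · simp [Complex.ofReal_mul]
    norm_num
    push_cast
    ring
  · rw [if_neg hm]
    have h1 : ∀ x : ℝ, Complex.exp (Complex.I * m * x) = Complex.exp ((Complex.I * m) * x) := by
      intro x; ring_nf
    have := integral_exp_mul_complex (a := -π) (b := π)
      (c := Complex.I * m) (by simp [Complex.ext_iff, hm])
    rw [this]
    have hz : Complex.sin (m * π) = 0 := by
      have := Real.sin_int_mul_pi m
      exact_mod_cast congrArg (Complex.ofReal) this
    have : Complex.exp (Complex.I * m * π) = Complex.exp (Complex.I * m * (-π : ℝ)) := by
      have this : Complex.exp (((m : ℂ) * (π:ℝ)) * Complex.I)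
          = Complex.exp (-((m : ℂ) * (π:ℝ)) * Complex.I) := by
        rw [Complex.exp_mul_I, Complex.exp_mul_I, Complex.cos_neg, Complex.sin_neg]
        rw [show ((m : ℂ) * (π:ℝ)) = ((m : ℂ) * (π:ℂ)) by push_cast; ring] at *
        rw [hz]
        simp
      push_cast
      rw [mul_comm Complex.I (m : ℂ)]
      calc Complex.exp ((m:ℂ) * Complex.I * π) = Complex.exp (((m:ℂ) * π) * Complex.I) := by ring_nf
        _ = Complex.exp (-((m:ℂ) * π) * Complex.I) := this
        _ = Complex.exp ((m:ℂ) * Complex.I * (-π)) := by ring_nf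
    rw [this, sub_self, zero_div]
    norm_num

noncomputable def Gf (a : ℝ) : ℝ → ℝ :=
  Set.indicator (Set.Icc (-π) π) (fun x => Real.exp (-(a * (1 - |Real.cos x|))))

lemma Gf_integrable (a : ℝ) : Integrable (Gf a) := by
  rw [Gf, integrable_indicator_iff measurableSet_Icc]
  apply ContinuousOn.integrableOn_compact isCompact_Icc
  fun_prop

lemma Gf_nonneg (a : ℝ) (x : ℝ) : 0 ≤ Gf a x := by
  rw [Gf]
  apply Set.indicator_nonneg
  intro x _
  positivity

lemma jordan_sq {x : ℝ} (hx : x ∈ Set.Icc (-(π/2)) (π/2)) :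
    (2 / π * x) ^ 2 ≤ Real.sin x ^ 2 := by
  obtain ⟨h1, h2⟩ := hx
  have key : 2 / π * |x| ≤ |Real.sin x| := by
    rcases le_or_gt 0 x with hx0 | hx0
    · rw [abs_of_nonneg hx0]
      exact (Real.mul_le_sin hx0 h2).trans (le_abs_self _)
    · rw [abs_of_neg hx0]
      calc 2 / π * -x ≤ Real.sin (-x) := Real.mul_le_sin (by linarith) (by linarith)
        _ = -Real.sin x := Real.sin_neg x
        _ ≤ |Real.sin x| := neg_le_abs _
  have h0 : 0 ≤ 2 / π * |x| := by positivity
  calc (2 / π * x) ^ 2 = (2 / π * |x|) ^ 2 := by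
        rw [mul_pow, mul_pow, sq_abs]
    _ ≤ |Real.sin x| ^ 2 := by
        apply pow_le_pow_left₀ h0 key
    _ = Real.sin x ^ 2 := sq_abs _

lemma g_periodic (a : ℝ) : Function.Periodic (fun x => Real.exp (-(a/2) * Real.sin x ^ 2)) π := by
  intro x
  simp [Real.sin_add_pi]

lemma Gf_integral_le (a : ℝ) (ha : 0 < a) :
    ∫ x : ℝ, Gf a x ≤ 2 * Real.sqrt (π / (2 * a / π ^ 2)) := by
  set g : ℝ → ℝ := fun x => Real.exp (-(a/2) * Real.sin x ^ 2) with hg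
  have hcontg : Continuous g := by fun_prop
  have hπ := Real.pi_pos
  have step1 : ∫ x : ℝ, Gf a x ≤ ∫ x in (-π)..π, g x := by
    rw [Gf, integral_indicator measurableSet_Icc, ← integral_Icc_eq_integral_Ioc.symm,
      ← intervalIntegral.integral_of_le (by linarith : -π ≤ π)]
    apply intervalIntegral.integral_mono_on (by linarith : -π ≤ π)
      (by apply Continuous.intervalIntegrable; fun_prop) (hcontg.intervalIntegrable _ _)
    intro x _
    apply Real.exp_le_exp.mpr
    have hc1 : |Real.cos x| ≤ 1 := Real.abs_cos_le_one x
    have hc0 : (0:ℝ) ≤ |Real.cos x| := abs_nonneg _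
    have hsq : Real.sin x ^ 2 = (1 - |Real.cos x|) * (1 + |Real.cos x|) := by
      have := Real.sin_sq_add_cos_sq x
      have h2 : Real.cos x ^ 2 = |Real.cos x| ^ 2 := (sq_abs _).symm
      nlinarith
    have h2le : Real.sin x ^ 2 ≤ 2 * (1 - |Real.cos x|) := by nlinarith
    have h3 := mul_le_mul_of_nonneg_left h2le (by positivity : (0:ℝ) ≤ a / 2)
    linarith
  have step2 : ∫ x in (-π)..π, g x = 2 * ∫ x in (-(π/2))..(π/2), g x := by
    have h1 : ∫ x in (-π)..(0:ℝ), g x = ∫ x in (-(π/2))..(π/2), g x := by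
      have := (g_periodic a).intervalIntegral_add_eq (-π) (-(π/2))
      rw [show -π + π = (0:ℝ) by ring, show -(π/2) + π = π/2 by ring] at this
      exact this
    have h2 : ∫ x in (0:ℝ)..π, g x = ∫ x in (-(π/2))..(π/2), g x := by
      have := (g_periodic a).intervalIntegral_add_eq 0 (-(π/2))
      rw [show (0:ℝ) + π = π by ring, show -(π/2) + π = π/2 by ring] at this
      exact this
    rw [← intervalIntegral.integral_add_adjacent_intervals
      (hcontg.intervalIntegrable _ _) (hcontg.intervalIntegrable _ _) (a := -π) (b := 0) (c := π),
      h1, h2]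
    ring
  set b : ℝ := 2 * a / π ^ 2 with hb
  have hbpos : 0 < b := by positivity
  have step3 : ∫ x in (-(π/2))..(π/2), g x ≤ ∫ x in (-(π/2))..(π/2), Real.exp (-b * x ^ 2) := by
    apply intervalIntegral.integral_mono_on (by linarith : -(π/2) ≤ π/2)
      (hcontg.intervalIntegrable _ _) (by apply Continuous.intervalIntegrable; fun_prop)
    intro x hx
    apply Real.exp_le_exp.mpr
    have := jordan_sq hx
    have hexpand : (2 / π * x) ^ 2 = (4 / π ^ 2) * x ^ 2 := by
      field_simp
      ring
    rw [hexpand] at this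
    have h := mul_le_mul_of_nonneg_left this (by positivity : (0:ℝ) ≤ a / 2)
    have hident : (a/2) * (4 / π ^ 2 * x ^ 2) = 2 * a / π ^ 2 * x ^ 2 := by
      field_simp
      ring
    rw [hb]
    linarith
  have step4 : ∫ x in (-(π/2))..(π/2), Real.exp (-b * x ^ 2) ≤ Real.sqrt (π / b) := by
    rw [← integral_gaussian b]
    rw [intervalIntegral.integral_of_le (by linarith : -(π/2) ≤ π/2)]
    apply setIntegral_le_integral (integrable_exp_neg_mul_sq hbpos)
    filter_upwards with x
    positivity
  linarith

-- new defs
def stp (d : ℕ) (s : Fin d × Bool) : Pt d := if s.2 then latE d s.1 else -latE d s.1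

noncomputable def ip (d : ℕ) (m : Pt d) (θ : Fin d → ℝ) : ℝ := ∑ j, (m j : ℝ) * θ j

noncomputable def cind : ℝ → ℂ := Set.indicator (Set.Icc (-π) π) (fun _ => 1)

lemma Fm_eq (m : ℤ) (x : ℝ) : Fm m x = cind x * Complex.exp (Complex.I * m * x) := by
  simp only [Fm, cind, Set.indicator]
  split <;> simp

lemma disp_ofFn (d n : ℕ) (f : Fin n → Fin d × Bool) :
    disp d (List.ofFn f) = ∑ k, stp d (f k) := by
  simp [disp, stp, List.map_ofFn, List.sum_ofFn, Function.comp]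

lemma ip_sub (d : ℕ) (a b : Pt d) (θ : Fin d → ℝ) :
    ip d (a - b) θ = ip d a θ - ip d b θ := by
  simp only [ip, Pi.sub_apply]
  rw [← Finset.sum_sub_distrib]
  congr 1; funext j; push_cast; ring

lemma ip_sum (d n : ℕ) (g : Fin n → Pt d) (θ : Fin d → ℝ) :
    ip d (∑ k, g k) θ = ∑ k, ip d (g k) θ := by
  simp only [ip, Finset.sum_apply]
  rw [Finset.sum_comm]
  congr 1; funext j
  rw [← Finset.sum_mul]
  push_cast
  ring

lemma ip_stp (d : ℕ) (s : Fin d × Bool) (θ : Fin d → ℝ) :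
    ip d (stp d s) θ = if s.2 then θ s.1 else -θ s.1 := by
  rcases s with ⟨j, b⟩
  cases b <;> simp only [stp, ip, if_true, if_false, Bool.false_eq_true, latE, Pi.neg_apply] <;>
    [skip; skip] <;>
  · rw [Fintype.sum_eq_single j]
    · simp
    · intro j' hj'
      simp [if_neg hj']

noncomputable def Psi (d : ℕ) (θ : Fin d → ℝ) : ℂ :=
  ∑ s : Fin d × Bool, Complex.exp (Complex.I * ip d (stp d s) θ)

lemma Psi_eq (d : ℕ) (θ : Fin d → ℝ) :
    Psi d θ = ((2 * ∑ j, Real.cos (θ j) : ℝ) : ℂ) := by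
  rw [Psi, Fintype.sum_prod_type]
  push_cast [Finset.mul_sum]
  congr 1; funext j
  rw [Fintype.sum_bool]
  rw [ip_stp, ip_stp]
  simp only [if_true, Bool.false_eq_true, if_false]
  rw [show Complex.I * (θ j : ℂ) = (θ j : ℂ) * Complex.I by ring,
    show Complex.I * ((-θ j : ℝ) : ℂ) = (-(θ j : ℂ)) * Complex.I by push_cast; ring]
  rw [Complex.exp_mul_I, Complex.exp_mul_I, Complex.cos_neg, Complex.sin_neg]
  rw [← Complex.ofReal_cos]
  ring

-- pointwise expansion
lemma expansion (d n : ℕ) (u : Pt d) (θ : Fin d → ℝ) :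
    ∑ f : Fin n → Fin d × Bool, ∏ j, Fm ((disp d (List.ofFn f) - u) j) (θ j)
      = (∏ j, cind (θ j)) *
        (Complex.exp (-Complex.I * ip d u θ) * Psi d θ ^ n) := by
  have key : ∀ f : Fin n → Fin d × Bool,
      (∏ j, Fm ((disp d (List.ofFn f) - u) j) (θ j))
        = (∏ j, cind (θ j)) * (Complex.exp (-Complex.I * ip d u θ) *
            ∏ k, Complex.exp (Complex.I * ip d (stp d (f k)) θ)) := by
    intro f
    simp only [Fm_eq]
    rw [Finset.prod_mul_distrib]
    congr 1
    rw [← Complex.exp_sum]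
    have h1 : ∑ j, Complex.I * (((disp d (List.ofFn f) - u) j : ℤ) : ℂ) * (θ j : ℂ)
        = Complex.I * (ip d (disp d (List.ofFn f) - u) θ : ℝ) := by
      rw [ip]
      push_cast
      rw [Finset.mul_sum]
      congr 1; funext j; ring
    rw [h1, ip_sub, disp_ofFn, ip_sum]
    rw [← Complex.exp_sum]
    rw [← Complex.exp_add]
    congr 1
    rw [← Finset.mul_sum]
    push_cast [Complex.ofReal_sub, Complex.ofReal_sum]
    ring
  rw [Finset.sum_congr rfl (fun f _ => key f), ← Finset.mul_sum, ← Finset.mul_sum]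
  congr 1
  congr 1
  -- ∑ f, ∏ k, exp(...) = Psi^n
  rw [Psi, ← Fin.prod_const n (∑ s : Fin d × Bool, Complex.exp (Complex.I * ip d (stp d s) θ)),
    Finset.prod_univ_sum]
  rw [← Fintype.piFinset_univ]

-- integral identity
lemma sum_integrals (d n : ℕ) (u : Pt d) :
    ∑ f : Fin n → Fin d × Bool, ∫ θ : Fin d → ℝ, ∏ j, Fm ((disp d (List.ofFn f) - u) j) (θ j)
      = (((2 * π) ^ d : ℝ) : ℂ) *
        ((Finset.univ.filter fun f : Fin n → Fin d × Bool => disp d (List.ofFn f) = u).card : ℂ) := by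
  have h1 : ∀ f : Fin n → Fin d × Bool,
      (∫ θ : Fin d → ℝ, ∏ j, Fm ((disp d (List.ofFn f) - u) j) (θ j))
        = if disp d (List.ofFn f) = u then (((2 * π) ^ d : ℝ) : ℂ) else 0 := by
    intro f
    rw [MeasureTheory.integral_fintype_prod_volume_eq_prod (ι := Fin d)
      (f := fun j x => Fm ((disp d (List.ofFn f) - u) j) x)]
    simp only [Fm_integral]
    by_cases h : disp d (List.ofFn f) = u
    · rw [if_pos h]
      have : ∀ j, (disp d (List.ofFn f) - u) j = 0 := by
        intro j; rw [h]; simp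
      simp only [this, if_pos rfl]
      rw [Finset.prod_const]
      push_cast
      simp [Finset.card_univ]
    · rw [if_neg h]
      obtain ⟨j, hj⟩ : ∃ j, (disp d (List.ofFn f) - u) j ≠ 0 := by
        by_contra hc
        push_neg at hc
        apply h
        funext j
        have := hc j
        simpa [sub_eq_zero] using this
      exact Finset.prod_eq_zero (Finset.mem_univ j) (by rw [if_neg hj]; exact Complex.ofReal_zero)
  rw [Finset.sum_congr rfl (fun f _ => h1 f)]
  rw [← Finset.sum_filter, Finset.sum_const]
  simp [mul_comm]

noncomputable def cindR : ℝ → ℝ := Set.indicator (Set.Icc (-π) π) (fun _ => 1)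

lemma Gf_eq (a : ℝ) (x : ℝ) :
    Gf a x = cindR x * Real.exp (-(a * (1 - |Real.cos x|))) := by
  simp only [Gf, cindR, Set.indicator]
  split <;> simp

lemma norm_cind (x : ℝ) : ‖cind x‖ = cindR x := by
  simp only [cind, cindR, Set.indicator]
  split <;> simp

lemma cindR_nonneg (x : ℝ) : 0 ≤ cindR x := by
  simp only [cindR, Set.indicator]
  split <;> norm_num

lemma cos_sum_bound (d : ℕ) (hd : 1 ≤ d) (θ : Fin d → ℝ) :
    |2 * ∑ j, Real.cos (θ j)| ≤ (2 * d : ℝ) * ∏ j, Real.exp (-(1 - |Real.cos (θ j)|) / d) := by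
  have hd0 : (0:ℝ) < d := by exact_mod_cast hd
  set T : ℝ := ∑ j, (1 - |Real.cos (θ j)|) with hT
  have h1 : |∑ j, Real.cos (θ j)| ≤ (d : ℝ) - T := by
    refine (Finset.abs_sum_le_sum_abs _ _).trans ?_
    rw [hT, Finset.sum_sub_distrib]
    simp [Finset.card_univ]
  have h2 : (d : ℝ) - T ≤ d * Real.exp (-T / d) := by
    have h := Real.add_one_le_exp (-T / d)
    have := mul_le_mul_of_nonneg_left h hd0.le
    have hident : (d:ℝ) * (-T/d + 1) = d - T := by field_simp; ring
    linarith [hident ▸ this]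
  have h3 : Real.exp (-T / d) = ∏ j, Real.exp (-(1 - |Real.cos (θ j)|) / d) := by
    rw [← Real.exp_sum]
    congr 1
    rw [hT, ← Finset.sum_neg_distrib, Finset.sum_div]

  rw [abs_mul, abs_two]
  calc 2 * |∑ j, Real.cos (θ j)| ≤ 2 * ((d:ℝ) * Real.exp (-T / d)) := by linarith
    _ = (2 * d : ℝ) * ∏ j, Real.exp (-(1 - |Real.cos (θ j)|) / d) := by rw [h3]; ring

lemma norm_expansion_le (d n : ℕ) (hd : 1 ≤ d) (u : Pt d) (θ : Fin d → ℝ) :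
    ‖(∏ j, cind (θ j)) * (Complex.exp (-Complex.I * ip d u θ) * Psi d θ ^ n)‖
      ≤ (2 * d : ℝ) ^ n * ∏ j, Gf ((n : ℝ) / d) (θ j) := by
  have hd0 : (0:ℝ) < d := by exact_mod_cast hd
  rw [norm_mul, norm_mul, norm_prod, norm_pow]
  have hexp1 : ‖Complex.exp (-Complex.I * (ip d u θ : ℝ))‖ = 1 := by
    rw [Complex.norm_exp]
    simp
  rw [hexp1, one_mul]
  simp only [norm_cind]
  have hPsi : ‖Psi d θ‖ = |2 * ∑ j, Real.cos (θ j)| := by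
    rw [Psi_eq, Complex.norm_real, Real.norm_eq_abs]
  have hbound : ‖Psi d θ‖ ^ n ≤ ((2 * d : ℝ) * ∏ j, Real.exp (-(1 - |Real.cos (θ j)|) / d)) ^ n := by
    apply pow_le_pow_left₀ (norm_nonneg _)
    rw [hPsi]
    exact cos_sum_bound d hd θ
  calc (∏ j, cindR (θ j)) * ‖Psi d θ‖ ^ n
      ≤ (∏ j, cindR (θ j)) * ((2 * d : ℝ) * ∏ j, Real.exp (-(1 - |Real.cos (θ j)|) / d)) ^ n :=
        mul_le_mul_of_nonneg_left hbound (Finset.prod_nonneg fun j _ => cindR_nonneg _)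
    _ = (2 * d : ℝ) ^ n * ∏ j, Gf ((n : ℝ) / d) (θ j) := by
        rw [mul_pow, ← Finset.prod_pow]
        rw [← mul_assoc, mul_comm (∏ j, cindR (θ j)), mul_assoc, ← Finset.prod_mul_distrib]
        congr 1
        refine Finset.prod_congr rfl fun j _ => ?_
        rw [Gf_eq, ← Real.exp_nat_mul]
        congr 2
        field_simp

lemma card_words_le (d n : ℕ) (hd : 1 ≤ d) (u : Pt d) :
    (2*π)^d * ((Finset.univ.filter
        fun f : Fin n → Fin d × Bool => disp d (List.ofFn f) = u).card : ℝ)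
      ≤ (2*d:ℝ)^n * (∫ x : ℝ, Gf ((n:ℝ)/d) x)^d := by
  have hint : ∀ f : Fin n → Fin d × Bool,
      Integrable (fun θ : Fin d → ℝ => ∏ j, Fm ((disp d (List.ofFn f) - u) j) (θ j)) := by
    intro f
    exact MeasureTheory.Integrable.fintype_prod (fun j => Fm_integrable _)
  have lhs_eq : (2*π)^d * ((Finset.univ.filter
        fun f : Fin n → Fin d × Bool => disp d (List.ofFn f) = u).card : ℝ)
      = ‖∑ f : Fin n → Fin d × Bool,
          ∫ θ : Fin d → ℝ, ∏ j, Fm ((disp d (List.ofFn f) - u) j) (θ j)‖ := by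
    rw [sum_integrals, norm_mul, Complex.norm_real, Real.norm_eq_abs,
      abs_of_nonneg (by positivity)]
    congr 1
    simp [Complex.norm_natCast]
  rw [lhs_eq, ← MeasureTheory.integral_finset_sum _ (fun f _ => hint f)]
  calc ‖∫ θ : Fin d → ℝ, ∑ f : Fin n → Fin d × Bool,
          ∏ j, Fm ((disp d (List.ofFn f) - u) j) (θ j)‖
      ≤ ∫ θ : Fin d → ℝ, ‖∑ f : Fin n → Fin d × Bool,
          ∏ j, Fm ((disp d (List.ofFn f) - u) j) (θ j)‖ :=
        MeasureTheory.norm_integral_le_integral_norm _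
    _ ≤ ∫ θ : Fin d → ℝ, (2 * d : ℝ) ^ n * ∏ j, Gf ((n : ℝ) / d) (θ j) := by
        apply MeasureTheory.integral_mono_of_nonneg
        · filter_upwards with θ using norm_nonneg _
        · exact (MeasureTheory.Integrable.fintype_prod (fun j => Gf_integrable _)).const_mul _
        · filter_upwards with θ
          rw [expansion]
          exact norm_expansion_le d n hd u θ
    _ = (2*d:ℝ)^n * (∫ x : ℝ, Gf ((n:ℝ)/d) x)^d := by
        rw [MeasureTheory.integral_const_mul,
          MeasureTheory.integral_fintype_prod_volume_eq_pow (ι := Fin d) (Gf ((n:ℝ)/d))]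
        simp

lemma card_words_decay (d : ℕ) (hd : 3 ≤ d) (n : ℕ) (hn : 1 ≤ n) (u : Pt d) :
    ((Finset.univ.filter
        fun f : Fin n → Fin d × Bool => disp d (List.ofFn f) = u).card : ℝ)
      ≤ ((2*π)^d)⁻¹ * (2 * Real.sqrt (d * π^3 / 2))^d * (2*d:ℝ)^n
          * ((1:ℝ)/n) ^ ((3:ℝ)/2) := by
  have hπ := Real.pi_pos
  have hd0 : (0:ℝ) < d := by positivity
  have hn0 : (0:ℝ) < n := by exact_mod_cast hn
  have ha : (0:ℝ) < (n:ℝ)/d := by positivity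
  have hGnn : 0 ≤ ∫ x : ℝ, Gf ((n:ℝ)/d) x :=
    MeasureTheory.integral_nonneg (fun x => Gf_nonneg _ x)
  have hGle : ∫ x : ℝ, Gf ((n:ℝ)/d) x
      ≤ 2 * Real.sqrt (d * π^3 / 2) * Real.sqrt ((1:ℝ)/n) := by
    refine (Gf_integral_le _ ha).trans_eq ?_
    rw [mul_assoc, ← Real.sqrt_mul (by positivity)]
    congr 2
    field_simp
  have key := card_words_le d n (by omega) u
  have hpow : (∫ x : ℝ, Gf ((n:ℝ)/d) x)^d
      ≤ (2 * Real.sqrt (d * π^3 / 2))^d * ((1:ℝ)/n) ^ ((3:ℝ)/2) := by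
    calc (∫ x : ℝ, Gf ((n:ℝ)/d) x)^d
        ≤ (2 * Real.sqrt (d * π^3 / 2) * Real.sqrt ((1:ℝ)/n))^d :=
          pow_le_pow_left₀ hGnn hGle d
      _ = (2 * Real.sqrt (d * π^3 / 2))^d * (Real.sqrt ((1:ℝ)/n))^d := mul_pow _ _ d
      _ ≤ (2 * Real.sqrt (d * π^3 / 2))^d * ((1:ℝ)/n) ^ ((3:ℝ)/2) := by
          apply mul_le_mul_of_nonneg_left _ (by positivity)
          rw [Real.sqrt_eq_rpow, ← Real.rpow_natCast (((1:ℝ)/n) ^ ((1:ℝ)/2)) d,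
            ← Real.rpow_mul (by positivity)]
          apply Real.rpow_le_rpow_of_exponent_ge (by positivity)
            (by rw [div_le_one hn0]; exact_mod_cast hn)
          have : (3:ℝ) ≤ (d:ℝ) := by exact_mod_cast hd
          nlinarith
  calc ((Finset.univ.filter
        fun f : Fin n → Fin d × Bool => disp d (List.ofFn f) = u).card : ℝ)
      = ((2*π)^d)⁻¹ * ((2*π)^d * ((Finset.univ.filter
          fun f : Fin n → Fin d × Bool => disp d (List.ofFn f) = u).card : ℝ)) := by
        rw [← mul_assoc, inv_mul_cancel₀ (by positivity), one_mul]
    _ ≤ ((2*π)^d)⁻¹ * ((2*d:ℝ)^n * ((2 * Real.sqrt (d * π^3 / 2))^d * ((1:ℝ)/n) ^ ((3:ℝ)/2))) := by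
        apply mul_le_mul_of_nonneg_left _ (by positivity)
        exact key.trans (mul_le_mul_of_nonneg_left hpow (by positivity))
    _ = ((2*π)^d)⁻¹ * (2 * Real.sqrt (d * π^3 / 2))^d * (2*d:ℝ)^n * ((1:ℝ)/n) ^ ((3:ℝ)/2) := by
        ring

section meas
variable {d : ℕ} (μ : Measure (ℕ → Fin d × Bool))

lemma cyl_measurable (n : ℕ) (f : Fin n → Fin d × Bool) :
    MeasurableSet {ω : ℕ → Fin d × Bool | ∀ k : Fin n, ω (k : ℕ) = f k} := by
  have : {ω : ℕ → Fin d × Bool | ∀ k : Fin n, ω (k : ℕ) = f k}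
      = ⋂ k : Fin n, (fun ω : ℕ → Fin d × Bool => ω (k : ℕ)) ⁻¹' {f k} := by
    ext ω; simp [Set.mem_iInter]
  rw [this]
  exact MeasurableSet.iInter fun k =>
    (measurable_pi_apply (k : ℕ)) (measurableSet_singleton (f k))

lemma event_measure (hμ : IsUniformBernoulli (Fin d × Bool) μ) (n : ℕ) (u : Pt d) :
    μ {ω : ℕ → Fin d × Bool | disp d (List.ofFn fun k : Fin n => ω (k : ℕ)) = u}
      = ((Finset.univ.filter
          fun f : Fin n → Fin d × Bool => disp d (List.ofFn f) = u).card : ENNReal)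
        * ((Fintype.card (Fin d × Bool) : ENNReal))⁻¹ ^ n := by
  set W := Finset.univ.filter fun f : Fin n → Fin d × Bool => disp d (List.ofFn f) = u with hW
  have hsplit : {ω : ℕ → Fin d × Bool | disp d (List.ofFn fun k : Fin n => ω (k : ℕ)) = u}
      = ⋃ f ∈ W, {ω : ℕ → Fin d × Bool | ∀ k : Fin n, ω (k : ℕ) = f k} := by
    ext ω
    simp only [Set.mem_setOf_eq, Set.mem_iUnion, hW, Finset.mem_filter, Finset.mem_univ,
      true_and]
    constructor
    · intro h
      exact ⟨fun k => ω (k : ℕ), by simpa using h, fun k => rfl⟩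
    · rintro ⟨f, hf, hωf⟩
      have : (fun k : Fin n => ω (k : ℕ)) = f := funext hωf
      rw [this]
      exact hf
  rw [hsplit, measure_biUnion_finset ?disj (fun f _ => cyl_measurable n f)]
  · rw [Finset.sum_congr rfl (fun f _ => hμ.2 n f), Finset.sum_const, nsmul_eq_mul]
  case disj =>
    intro f hf g hg hfg
    rw [Function.onFun, Set.disjoint_left]
    intro ω hωf hωg
    apply hfg
    funext k
    rw [← hωf k, ← hωg k]

end meas

lemma hcard (d : ℕ) : (Fintype.card (Fin d × Bool)) = 2 * d := by
  simp [Fintype.card_prod]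
  ring

lemma event_measure_le {d : ℕ} {μ : MeasureTheory.Measure (ℕ → Fin d × Bool)} (hd : 3 ≤ d) (hμ : IsUniformBernoulli (Fin d × Bool) μ)
    (n : ℕ) (hn : 1 ≤ n) (u : Pt d) :
    μ {ω : ℕ → Fin d × Bool | disp d (List.ofFn fun k : Fin n => ω (k : ℕ)) = u}
      ≤ ENNReal.ofReal ((((2*π)^d)⁻¹ * (2 * Real.sqrt (d * π^3 / 2))^d)
          * ((1:ℝ)/n) ^ ((3:ℝ)/2)) := by
  have hπ := Real.pi_pos
  have hd0 : (0:ℝ) < 2 * d := by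
    have : (3:ℝ) ≤ d := by exact_mod_cast hd
    linarith
  rw [event_measure μ hμ n u]
  set W := Finset.univ.filter fun f : Fin n → Fin d × Bool => disp d (List.ofFn f) = u
  have hc : ((Fintype.card (Fin d × Bool) : ENNReal))⁻¹ ^ n
      = ENNReal.ofReal (((2 * d : ℝ))⁻¹ ^ n) := by
    have h0 : ((Fintype.card (Fin d × Bool) : ℕ) : ENNReal) = ENNReal.ofReal (2*(d:ℝ)) := by
      rw [hcard d, ← ENNReal.ofReal_natCast]
      congr 1
      push_cast
      ring
    rw [h0, ENNReal.ofReal_pow (by positivity), ← ENNReal.ofReal_inv_of_pos hd0]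
  rw [hc, show ((W.card : ℕ) : ENNReal) = ENNReal.ofReal ((W.card : ℕ) : ℝ) by
      rw [ENNReal.ofReal_natCast],
    ← ENNReal.ofReal_mul (by positivity)]
  apply ENNReal.ofReal_le_ofReal
  have hbound := card_words_decay d hd n hn u
  have hr : ((2*d:ℝ))^n * ((2*d:ℝ)⁻¹)^n = 1 := by
    rw [← mul_pow, mul_inv_cancel₀ (by positivity), one_pow]
  set K := ((2*π)^d)⁻¹ * (2 * Real.sqrt (d * π^3 / 2))^d with hK
  calc ((W.card : ℕ) : ℝ) * ((2*d:ℝ)⁻¹)^n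
      ≤ (K * (2*d:ℝ)^n * ((1:ℝ)/n) ^ ((3:ℝ)/2)) * ((2*d:ℝ)⁻¹)^n := by
        apply mul_le_mul_of_nonneg_right _ (by positivity)
        calc ((W.card : ℕ) : ℝ) ≤ ((2*π)^d)⁻¹ * (2 * Real.sqrt (d * π^3 / 2))^d * (2*d:ℝ)^n
              * ((1:ℝ)/n) ^ ((3:ℝ)/2) := hbound
          _ = K * (2*d:ℝ)^n * ((1:ℝ)/n) ^ ((3:ℝ)/2) := by rw [hK]
    _ = K * ((1:ℝ)/n) ^ ((3:ℝ)/2) * ((2*d:ℝ)^n * ((2*d:ℝ)⁻¹)^n) := by ring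
    _ = K * ((1:ℝ)/n) ^ ((3:ℝ)/2) := by rw [hr, mul_one]

set_option maxHeartbeats 1000000 in
lemma tsum_event_ne_top {d : ℕ} {μ : MeasureTheory.Measure (ℕ → Fin d × Bool)} (hd : 3 ≤ d) (hμ : IsUniformBernoulli (Fin d × Bool) μ) (u : Pt d) :
    ∑' n : ℕ, μ {ω : ℕ → Fin d × Bool | disp d (List.ofFn fun k : Fin n => ω (k : ℕ)) = u}
      ≠ ⊤ := by
  haveI := hμ.1
  set K := ((2*π)^d)⁻¹ * (2 * Real.sqrt (d * π^3 / 2))^d with hK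
  set g : ℕ → ℝ := fun n => K * ((1:ℝ)/n) ^ ((3:ℝ)/2) with hg
  have hπ := Real.pi_pos
  have hKnn : 0 ≤ K := by positivity
  have hgnn : ∀ n, 0 ≤ g n := fun n => by rw [hg]; positivity
  have hgsum : Summable g := by
    have h1 : (fun n : ℕ => ((1:ℝ)/n) ^ ((3:ℝ)/2)) = fun n : ℕ => (((n:ℝ)) ^ ((3:ℝ)/2))⁻¹ := by
      funext n
      rw [Real.div_rpow (by norm_num) (Nat.cast_nonneg n), Real.one_rpow, one_div]
    rw [hg]
    apply Summable.mul_left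
    rw [h1]
    exact Real.summable_nat_rpow_inv.mpr (by norm_num)
  have hgsum' : Summable (fun n => g (n+1)) := (summable_nat_add_iff 1).mpr hgsum
  set h : ℕ → ℝ := fun n => if n = 0 then 1 else g n with hh
  have hhsum : Summable h := by
    apply (summable_nat_add_iff 1).mp
    have : (fun n : ℕ => h (n+1)) = fun n : ℕ => g (n+1) := by
      funext n
      simp [hh]
    rw [this]
    exact (summable_nat_add_iff 1).mpr hgsum
  have hhnn : ∀ n, 0 ≤ h n := by
    intro n
    rw [hh]
    dsimp only
    split
    · norm_num
    · exact hgnn n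
  have key : ∀ n : ℕ, μ {ω : ℕ → Fin d × Bool |
        disp d (List.ofFn fun k : Fin n => ω (k : ℕ)) = u} ≤ ENNReal.ofReal (h n) := by
    intro n
    rcases Nat.eq_zero_or_pos n with rfl | hn
    · rw [hh]
      simpa using prob_le_one
    · have : h n = g n := by rw [hh]; simp [Nat.pos_iff_ne_zero.mp hn]
      rw [this]
      exact event_measure_le hd hμ n hn u
  have hfin : (∑' n : ℕ, μ {ω : ℕ → Fin d × Bool |
        disp d (List.ofFn fun k : Fin n => ω (k : ℕ)) = u})
      ≤ ENNReal.ofReal (∑' n, h n) := by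
    calc ∑' n : ℕ, μ {ω : ℕ → Fin d × Bool |
          disp d (List.ofFn fun k : Fin n => ω (k : ℕ)) = u}
        ≤ ∑' n : ℕ, ENNReal.ofReal (h n) := ENNReal.tsum_le_tsum key
      _ = ENNReal.ofReal (∑' n, h n) := (ENNReal.ofReal_tsum_of_nonneg hhnn hhsum).symm
  exact (hfin.trans_lt ENNReal.ofReal_lt_top).ne

end AuxiliaryLemmas

/-- For `d ≥ 3`, almost surely the signed crossing counts of the simple
random walk on `ℤ^d` stabilize: for every oriented edge `(v,i)` the sequence
`n ↦ γ_n(v,i)` is eventually constant; in particular each edge is traversed only finitely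
many times, and the stabilized edge-count function `Φ(ω)` is a well-defined
everywhere-finite integer-valued function on edges. -/
theorem crossing_counts_stabilize (d : ℕ) (hd : 3 ≤ d)
    (μ : MeasureTheory.Measure (ℕ → Fin d × Bool))
    (hμ : IsUniformBernoulli (Fin d × Bool) μ) :
    ∀ᵐ ω ∂μ, ∀ (v : Pt d) (i : Fin d), ∃ N : ℕ, ∀ n : ℕ, N ≤ n →
      crossFrom d 0 (List.ofFn fun k : Fin n => ω (k : ℕ)) (v, i)
        = crossFrom d 0 (List.ofFn fun k : Fin N => ω (k : ℕ)) (v, i) := by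
  
  have hBC : ∀ᵐ ω ∂μ, ∀ u : Pt d,
      {n : ℕ | disp d (List.ofFn fun k : Fin n => ω (k : ℕ)) = u}.Finite := by
    rw [MeasureTheory.ae_all_iff]
    intro u
    have hfin := MeasureTheory.ae_finite_setOf_mem
      (μ := μ) (s := fun n : ℕ => {ω : ℕ → Fin d × Bool |
        disp d (List.ofFn fun k : Fin n => ω (k : ℕ)) = u})
      (tsum_event_ne_top hd hμ u)
    filter_upwards [hfin] with ω hω
    exact hω
  filter_upwards [hBC] with ω hω v i
  obtain ⟨N, hN⟩ := ((hω v).union (hω (v + latE d i))).bddAbove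
  refine ⟨N + 1, fun n hn => ?_⟩
  refine cross_stab d ω v i (N + 1) ?_ n hn
  intro m hm
  constructor <;> intro hc
  · exact absurd (hN (Set.mem_union_left _ hc)) (by omega)
  · exact absurd (hN (Set.mem_union_right _ hc)) (by omega)
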